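/- For every m ≥ 1, the first five occurrences of E_{2,m} in the period-doubling sequence D start at positions 2^m + 1, 3·2^{m−1} + 1, 5·2^m + 1, 11·2^{m−1} + 1 and 7·2^m + 1; consequently r_0(E_{2,m}) = A_m, r_1(E_{2,m}) = r_3(E_{2,m}) = A_{m−1}, r_2(E_{2,m}) = A_{m−1} A_m B_{m+1}, and r_4(E_{2,m}) = B_m B_{m−1}. -/

import Mathlib

/-- The alphabet: letters a, b (for the period-doubling sequence) and c (used by Θ₂). -/
inductive Letter : Type
  | a | b | c
deriving DecidableEq, Repr

open Letter

/-- The period-doubling substitution σ : a ↦ ab, b ↦ aa, extended to words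
(the extra letter c is left untouched; it is never produced). -/
def sigmaw : List Letter → List Letter :=
  fun w => w.flatMap fun x => match x with
    | .a => [.a, .b]
    | .b => [.a, .a]
    | .c => [.c]

/-- A_m = σ^m(a). -/
def A (m : ℕ) : List Letter := sigmaw^[m] [.a]

/-- B_m = σ^m(b). -/
def B (m : ℕ) : List Letter := sigmaw^[m] [.b]

/-- δ_m, the last letter of A_m. -/
def delta (m : ℕ) : Letter := (A m).getLastD .a

/-- The period-doubling sequence D, as a function giving its (n+1)-st letter
(0-indexed); it is the fixed point of σ beginning with a, and A_{n+1} is a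
prefix of it of length 2^{n+1} > n. -/
def D (n : ℕ) : Letter := (A (n + 1)).getD n .a

/-- The finite segment D[i .. i+len−1] of the period-doubling sequence,
with 1-based starting position i. -/
def Dseg (i len : ℕ) : List Letter := (List.range len).map fun k => D (i - 1 + k)

/-- u occurs in the finite word w at (1-based) position i. -/
def OccursAt {α : Type*} (u w : List α) (i : ℕ) : Prop :=
  1 ≤ i ∧ i - 1 + u.length ≤ w.length ∧ (w.drop (i - 1)).take u.length = u

/-- u is a factor of the finite word w. -/
def IsFactor {α : Type*} (u w : List α) : Prop := ∃ i, OccursAt u w i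

/-- u occurs in the period-doubling sequence D at (1-based) position i. -/
def DOccursAt (u : List Letter) (i : ℕ) : Prop := 1 ≤ i ∧ Dseg i u.length = u

/-- u is a factor of the period-doubling sequence D. -/
def FactorD (u : List Letter) : Prop := ∃ i, DOccursAt u i

/-- L(u,p): the starting position of the p-th occurrence (p ≥ 1) of u in D. -/
noncomputable def L (u : List Letter) (p : ℕ) : ℕ := Nat.nth (DOccursAt u) (p - 1)

/-- r_p(u): the p-th return word of u (p ≥ 1), i.e. D[L(u,p) .. L(u,p+1)−1];
r_0(u) is the prefix of D preceding the first occurrence of u. -/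
noncomputable def r (u : List Letter) (p : ℕ) : List Letter :=
  if p = 0 then Dseg 1 (L u 1 - 1) else Dseg (L u p) (L u (p + 1) - L u p)

/-- The morphism τ₁ : a ↦ a, b ↦ bb, extended to words. -/
def tau1 : List Letter → List Letter :=
  fun w => w.flatMap fun x => match x with
    | .a => [.a]
    | .b => [.b, .b]
    | .c => [.c]

/-- The morphism τ₂ : a ↦ ab, b ↦ acac, extended to words. -/
def tau2 : List Letter → List Letter :=
  fun w => w.flatMap fun x => match x with
    | .a => [.a, .b]
    | .b => [.a, .c, .a, .c]
    | .c => [.c]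

/-- Θ₁[p], the p-th letter (p ≥ 1) of Θ₁ = τ₁(D): since |τ₁(w)| ≥ |w|, the p-th
letter of Θ₁ is the p-th letter of the image of the length-p prefix of D. -/
def Theta1 (p : ℕ) : Letter := (tau1 (Dseg 1 p)).getD (p - 1) .a

/-- Θ₂[p], the p-th letter (p ≥ 1) of Θ₂ = τ₂(D). -/
def Theta2 (p : ℕ) : Letter := (tau2 (Dseg 1 p)).getD (p - 1) .a

/-- The envelope word E_{1,m} = A_m with its last letter δ_m deleted. -/
def E1 (m : ℕ) : List Letter := (A m).dropLast

/-- The envelope word E_{2,m} = B_m B_{m−1} with its last letter δ_m deleted. -/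
def E2 (m : ℕ) : List Letter := (B m ++ B (m - 1)).dropLast

/-- Enumeration of the envelope words in the order
E_{1,1} ⊏ E_{2,1} ⊏ E_{1,2} ⊏ E_{2,2} ⊏ …. -/
def Eword (k : ℕ) : List Letter := if k % 2 = 0 then E1 (k / 2 + 1) else E2 (k / 2 + 1)

/-- Env(u): the ⊏-least envelope word having u as a factor. -/
noncomputable def Env (u : List Letter) : List Letter :=
  Eword (sInf {k | IsFactor u (Eword k)})

/-- The letterwise complement exchanging a and b. -/
def comp : Letter → Letter
  | .a => .b
  | .b => .a
  | .c => .c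

/-! Since `E_{2,k+2} = σ(E_{2,k+1}) a` and `E_{2,k+1}` begins with `a`, an occurrence of
`E_{2,k+2}` carries a `b` right after its first letter; as `D(2n) = a`, that `b` sits at an odd
index, so the occurrence is the `σ`-image of an occurrence of `E_{2,k+1}` (`σ` is injective and
`D[2s+1 .. 2s+2l] = σ(D[s+1 .. s+l])`). Hence the occurrences of `E_{2,k+1}` are exactly the
positions `2^k s + 1` at which `aa = E_{2,1}` occurs at `s + 1`, in increasing order. The first five
such `s` are `2, 3, 10, 11, 14`, read off the prefix `A_4` of `D`, and each return word is `σ^k`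
of a short factor of `A_4`. -/

namespace Nat

variable {p q : ℕ → Prop} {f : ℕ → ℕ}

lemma count_apply_of_strictMono [DecidablePred p] [DecidablePred q] (hf : StrictMono f)
    (hpq : ∀ i, p i ↔ ∃ s, q s ∧ f s = i) (n : ℕ) : count p (f n) = count q n := by
  rw [count_eq_card_filter_range, count_eq_card_filter_range, eq_comm,
    ← Finset.card_image_of_injective _ hf.injective]
  congr 1
  ext i
  simp only [Finset.mem_filter, Finset.mem_range, Finset.mem_image, hpq]
  constructor
  · rintro ⟨s, ⟨hsn, hs⟩, rfl⟩
    exact ⟨hf hsn, s, hs, rfl⟩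
  · rintro ⟨hi, s, hs, rfl⟩
    exact ⟨s, ⟨hf.lt_iff_lt.1 hi, hs⟩, rfl⟩

lemma nth_count_of_strictMono [DecidablePred q] (hf : StrictMono f)
    (hpq : ∀ i, p i ↔ ∃ s, q s ∧ f s = i) {s : ℕ} (hs : q s) : nth p (count q s) = f s := by
  classical
  rw [← count_apply_of_strictMono hf hpq]
  exact nth_count ((hpq _).2 ⟨s, hs, rfl⟩)

end Nat

namespace PeriodDoubling

open List

lemma sigmaw_append (u v : List Letter) : sigmaw (u ++ v) = sigmaw u ++ sigmaw v :=
  flatMap_append ..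

lemma sigmaw_iterate_append (k : ℕ) (u v : List Letter) :
    sigmaw^[k] (u ++ v) = sigmaw^[k] u ++ sigmaw^[k] v := by
  induction k generalizing u v with
  | zero => rfl
  | succ k ih => simp only [Function.iterate_succ_apply, sigmaw_append, ih]

lemma sigmaw_cons {x : Letter} (hx : x ≠ c) (w : List Letter) :
    sigmaw (x :: w) = a :: comp x :: sigmaw w := by
  cases x <;> first | rfl | exact absurd rfl hx

lemma c_mem_sigmaw_iff {w : List Letter} : c ∈ sigmaw w ↔ c ∈ w := by
  simp only [sigmaw, mem_flatMap]
  constructor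
  · rintro ⟨x, hx, hc⟩
    cases x <;> simp_all
  · exact fun hc => ⟨c, hc, mem_singleton_self c⟩

lemma length_sigmaw {w : List Letter} (hw : c ∉ w) : (sigmaw w).length = 2 * w.length := by
  induction w with
  | nil => rfl
  | cons x w ih =>
    rw [mem_cons, not_or] at hw
    rw [sigmaw_cons (Ne.symm hw.1), length_cons, length_cons, length_cons, ih hw.2]
    ring

lemma getD_sigmaw_two_mul {w : List Letter} (hw : c ∉ w) {k : ℕ} (hk : k < w.length) :
    (sigmaw w).getD (2 * k) a = a ∧ (sigmaw w).getD (2 * k + 1) a = comp (w.getD k a) := by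
  induction w generalizing k with
  | nil => simp at hk
  | cons x w ih =>
    rw [mem_cons, not_or] at hw
    rw [sigmaw_cons (Ne.symm hw.1)]
    cases k with
    | zero => exact ⟨rfl, rfl⟩
    | succ k => exact ih hw.2 (by simpa using hk)

/-- The images `ab`, `aa`, `c` of the three letters form a prefix code. -/
lemma sigmaw_injective : Function.Injective sigmaw := by
  intro u
  induction u with
  | nil => rintro (_ | ⟨y, v⟩) h <;> [rfl; cases y <;> simp [sigmaw] at h]
  | cons x u ih =>
    rintro (_ | ⟨y, v⟩) h
    · cases x <;> simp [sigmaw] at h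
    · cases x <;> cases y <;> simp only [sigmaw, flatMap_cons, cons_append, nil_append,
        cons.injEq, reduceCtorEq, false_and, and_false, true_and] at h <;> rw [ih h]

lemma dropLast_sigmaw {w : List Letter} (hw : c ∉ w) (hne : w ≠ []) :
    (sigmaw w).dropLast = sigmaw w.dropLast ++ [a] := by
  obtain ⟨u, x, rfl⟩ := (w.eq_nil_or_concat').resolve_left hne
  have hx : x ≠ c := fun h => hw (by simp [h])
  rw [sigmaw_append, dropLast_concat, sigmaw_cons hx, dropLast_append_of_ne_nil (by simp)]
  rfl

lemma A_succ (m : ℕ) : A (m + 1) = sigmaw (A m) := Function.iterate_succ_apply' ..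

lemma B_succ (m : ℕ) : B (m + 1) = sigmaw (B m) := Function.iterate_succ_apply' ..

lemma iterate_sigmaw_A (k j : ℕ) : sigmaw^[k] (A j) = A (k + j) :=
  (Function.iterate_add_apply ..).symm

lemma iterate_sigmaw_B (k j : ℕ) : sigmaw^[k] (B j) = B (k + j) :=
  (Function.iterate_add_apply ..).symm

lemma c_not_mem_A (m : ℕ) : c ∉ A m := by
  induction m with
  | zero => decide
  | succ m ih => rwa [A_succ, c_mem_sigmaw_iff]

lemma c_not_mem_B (m : ℕ) : c ∉ B m := by
  induction m with
  | zero => decide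
  | succ m ih => rwa [B_succ, c_mem_sigmaw_iff]

lemma length_A (m : ℕ) : (A m).length = 2 ^ m := by
  induction m with
  | zero => rfl
  | succ m ih => rw [A_succ, length_sigmaw (c_not_mem_A m), ih, pow_succ, mul_comm]

lemma length_B (m : ℕ) : (B m).length = 2 ^ m := by
  induction m with
  | zero => rfl
  | succ m ih => rw [B_succ, length_sigmaw (c_not_mem_B m), ih, pow_succ, mul_comm]

lemma A_succ_eq_append (m : ℕ) : A (m + 1) = A m ++ B m := by
  induction m with
  | zero => rfl
  | succ m ih => rw [A_succ, ih, sigmaw_append, ← A_succ, ← B_succ, ← ih]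

lemma A_prefix_of_le {m n : ℕ} (h : m ≤ n) : A m <+: A n := by
  induction n, h using Nat.le_induction with
  | base => exact prefix_rfl
  | succ n _ ih => exact ih.trans (A_succ_eq_append n ▸ prefix_append _ _)

lemma getD_A_of_le {m m' n : ℕ} (hle : m ≤ m') (hn : n < (A m).length) :
    (A m').getD n a = (A m).getD n a := by
  have hpre := A_prefix_of_le hle
  rw [getD_eq_getElem _ _ hn, getD_eq_getElem _ _ (hpre.length_le.trans_lt' hn), hpre.getElem hn]

lemma lt_length_A_succ (n : ℕ) : n < (A (n + 1)).length := by
  rw [length_A]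
  exact n.lt_two_pow_self.trans (Nat.pow_lt_pow_succ one_lt_two)

lemma D_eq_getD_A {M n : ℕ} (hn : n < 2 ^ M) : D n = (A M).getD n a := by
  rcases le_total (n + 1) M with h | h
  · exact (getD_A_of_le h (lt_length_A_succ n)).symm
  · exact getD_A_of_le h ((length_A M).symm ▸ hn)

lemma D_ne_c (n : ℕ) : D n ≠ c := by
  rw [D, getD_eq_getElem _ _ (lt_length_A_succ n)]
  exact fun h => c_not_mem_A _ (h ▸ getElem_mem _)

lemma D_two_mul_and_add_one (n : ℕ) : D (2 * n) = a ∧ D (2 * n + 1) = comp (D n) := by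
  have hn := lt_length_A_succ n
  have h2n : 2 * n + 1 < 2 ^ (n + 2) := by rw [length_A] at hn; rw [pow_succ]; omega
  rw [D_eq_getD_A (by omega : 2 * n < 2 ^ (n + 2)), D_eq_getD_A h2n, A_succ (n + 1)]
  exact getD_sigmaw_two_mul (c_not_mem_A _) hn

lemma D_two_mul (n : ℕ) : D (2 * n) = a := (D_two_mul_and_add_one n).1

lemma D_two_mul_add_one (n : ℕ) : D (2 * n + 1) = comp (D n) := (D_two_mul_and_add_one n).2

lemma sigmaw_singleton_D (n : ℕ) : sigmaw [D n] = [D (2 * n), D (2 * n + 1)] := by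
  rw [sigmaw_cons (D_ne_c n), D_two_mul, D_two_mul_add_one]
  rfl

lemma length_Dseg (i l : ℕ) : (Dseg i l).length = l := by simp [Dseg]

lemma Dseg_succ (i l : ℕ) : Dseg i (l + 1) = Dseg i l ++ [D (i - 1 + l)] := by
  simp [Dseg, range_succ]

lemma Dseg_two_mul (s l : ℕ) : Dseg (2 * s + 1) (2 * l) = sigmaw (Dseg (s + 1) l) := by
  induction l with
  | zero => rfl
  | succ l ih =>
    rw [Nat.mul_succ, Dseg_succ, Dseg_succ, ih, Dseg_succ, sigmaw_append, append_assoc,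
      sigmaw_singleton_D]
    simp only [Nat.add_sub_cancel, mul_add, add_assoc, singleton_append]

lemma Dseg_two_mul_add_one (s l : ℕ) :
    Dseg (2 * s + 1) (2 * l + 1) = sigmaw (Dseg (s + 1) l) ++ [a] := by
  rw [Dseg_succ, Dseg_two_mul, Nat.add_sub_cancel, ← mul_add, D_two_mul]

lemma Dseg_two_pow_mul (k s l : ℕ) :
    Dseg (2 ^ k * s + 1) (2 ^ k * l) = sigmaw^[k] (Dseg (s + 1) l) := by
  induction k with
  | zero => simp
  | succ k ih =>
    rw [pow_succ', mul_assoc, mul_assoc, Dseg_two_mul, ih, Function.iterate_succ_apply']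

lemma Dseg_one_two_pow (k : ℕ) : Dseg 1 (2 ^ k) = A k := by
  have hD0 : Dseg 1 1 = [a] := congrArg ([·]) (D_two_mul 0)
  simpa [hD0, A] using Dseg_two_pow_mul k 0 1

lemma Dseg_eq_take_drop {s l N : ℕ} (h : s + l ≤ N) :
    Dseg (s + 1) l = ((Dseg 1 N).drop s).take l := by
  apply ext_getElem
  · simp only [length_Dseg, length_take, length_drop, left_eq_inf]
    omega
  · intro i _ _
    simp [Dseg]

lemma getD_Dseg {i l k : ℕ} (hk : k < l) : (Dseg i l).getD k a = D (i - 1 + k) := by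
  simp [Dseg, getD_eq_getElem?_getD, hk]

lemma Dseg_eq_sigmaw_append_iff {w : List Letter} (hw : w.head? = some a) {t : ℕ} :
    Dseg (t + 1) (2 * w.length + 1) = sigmaw w ++ [a] ↔
      ∃ s, 2 * s = t ∧ Dseg (s + 1) w.length = w := by
  constructor
  · intro h
    obtain ⟨w', rfl⟩ : ∃ w', w = a :: w' := by
      cases w with
      | nil => simp at hw
      | cons x w' => simp only [head?_cons, Option.some.injEq] at hw; exact ⟨w', hw ▸ rfl⟩
    have hb : D (t + 1) = b := by
      have h1 := congrArg (·.getD 1 a) h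
      simp only [getD_Dseg (by simp : 1 < 2 * (a :: w').length + 1)] at h1
      simpa [sigmaw_cons, comp] using h1
    obtain ⟨s, rfl | rfl⟩ := Nat.even_or_odd' t
    · rw [Dseg_two_mul_add_one] at h
      exact ⟨s, rfl, sigmaw_injective (append_inj_left' h rfl)⟩
    · rw [show 2 * s + 1 + 1 = 2 * (s + 1) by ring, D_two_mul] at hb
      exact absurd hb (by decide)
  · rintro ⟨s, rfl, hs⟩
    rw [Dseg_two_mul_add_one, hs]

lemma B_ne_nil (m : ℕ) : B m ≠ [] :=
  ne_nil_of_length_pos (by simp [length_B])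

lemma E2_add_two (k : ℕ) : E2 (k + 2) = sigmaw (E2 (k + 1)) ++ [a] := by
  change (B (k + 2) ++ B (k + 1)).dropLast = sigmaw (B (k + 1) ++ B k).dropLast ++ [a]
  rw [dropLast_append_of_ne_nil (B_ne_nil _), dropLast_append_of_ne_nil (B_ne_nil _), B_succ k,
    dropLast_sigmaw (c_not_mem_B k) (B_ne_nil k), sigmaw_append, ← B_succ, ← B_succ, append_assoc]

lemma head?_E2 (k : ℕ) : (E2 (k + 1)).head? = some a := by
  induction k with
  | zero => rfl
  | succ k ih =>
    obtain ⟨w, hw⟩ := head?_eq_some_iff.1 ih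
    rw [E2_add_two, hw, sigmaw_cons (by decide)]
    rfl

lemma length_E2_add_two (k : ℕ) : (E2 (k + 2)).length = 2 * (E2 (k + 1)).length + 1 := by
  change (B (k + 2) ++ B (k + 1)).dropLast.length = 2 * (B (k + 1) ++ B k).dropLast.length + 1
  simp only [length_dropLast, length_append, length_B, pow_succ]
  have : 0 < 2 ^ k := Nat.two_pow_pos k
  omega

lemma dOccursAt_E2_add_two_iff (k t : ℕ) :
    DOccursAt (E2 (k + 2)) (t + 1) ↔ ∃ s, 2 * s = t ∧ DOccursAt (E2 (k + 1)) (s + 1) := by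
  simp only [DOccursAt, le_add_iff_nonneg_left, zero_le, true_and]
  rw [length_E2_add_two, E2_add_two]
  exact Dseg_eq_sigmaw_append_iff (head?_E2 k)

lemma dOccursAt_E2_iff (k i : ℕ) :
    DOccursAt (E2 (k + 1)) i ↔ ∃ s, DOccursAt (E2 1) (s + 1) ∧ 2 ^ k * s + 1 = i := by
  induction k generalizing i with
  | zero =>
    refine ⟨fun h => ⟨i - 1, ?_, ?_⟩, ?_⟩
    · rwa [Nat.sub_add_cancel h.1]
    · have := h.1; simp only [pow_zero, one_mul]; omega
    · rintro ⟨s, hs, rfl⟩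
      simpa using hs
  | succ k ih =>
    rcases i with _ | t
    · simp [DOccursAt]
    rw [dOccursAt_E2_add_two_iff]
    constructor
    · rintro ⟨s, rfl, hs⟩
      obtain ⟨u, hu, hus⟩ := (ih _).1 hs
      exact ⟨u, hu, by rw [pow_succ, mul_comm _ 2, mul_assoc]; omega⟩
    · rintro ⟨u, hu, hut⟩
      rw [pow_succ, mul_comm _ 2, mul_assoc] at hut
      exact ⟨2 ^ k * u, by omega, (ih _).2 ⟨u, hu, rfl⟩⟩

lemma Dseg_eq_take_drop_A {s l M : ℕ} (h : s + l ≤ 2 ^ M) :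
    Dseg (s + 1) l = ((A M).drop s).take l := by
  rw [Dseg_eq_take_drop h, Dseg_one_two_pow]

instance (u : List Letter) : DecidablePred (DOccursAt u) := fun i =>
  inferInstanceAs (Decidable (1 ≤ i ∧ Dseg i u.length = u))

lemma L_E2 {k s : ℕ} (hs : DOccursAt (E2 1) (s + 1)) :
    L (E2 (k + 1)) (Nat.count (fun s => DOccursAt (E2 1) (s + 1)) s + 1) = 2 ^ k * s + 1 :=
  Nat.nth_count_of_strictMono
    (fun _ _ h => Nat.add_lt_add_right (Nat.mul_lt_mul_of_pos_left h (Nat.two_pow_pos k)) 1)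
    (dOccursAt_E2_iff k) hs

lemma dOccursAt_E2_one_iff {s : ℕ} (hs : s ≤ 14) :
    DOccursAt (E2 1) (s + 1) ↔ ((A 4).drop s).take 2 = E2 1 := by
  rw [DOccursAt, ← Dseg_eq_take_drop_A (by omega)]
  exact and_iff_right (Nat.le_add_left 1 s)

lemma L_E2_of_A_four {k s j : ℕ} (hs : s ≤ 14) (hocc : ((A 4).drop s).take 2 = E2 1)
    (hj : Nat.count (fun s => ((A 4).drop s).take 2 = E2 1) s = j) :
    L (E2 (k + 1)) (j + 1) = 2 ^ k * s + 1 := by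
  have hcount : Nat.count (fun s => DOccursAt (E2 1) (s + 1)) s = j := by
    rw [← hj, Nat.count_eq_card_filter_range, Nat.count_eq_card_filter_range]
    congr 1
    exact Finset.filter_congr fun i hi =>
      dOccursAt_E2_one_iff (by rw [Finset.mem_range] at hi; omega)
  rw [← hcount]
  exact L_E2 ((dOccursAt_E2_one_iff hs).2 hocc)

lemma r_zero_of_L_one {u : List Letter} {n : ℕ} (h : L u 1 = n + 1) : r u 0 = Dseg 1 n := by
  simp [r, h]

lemma r_of_L {u : List Letter} {p k s s' : ℕ} (hp : p ≠ 0) (h : L u p = 2 ^ k * s + 1)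
    (h' : L u (p + 1) = 2 ^ k * s' + 1) : r u p = sigmaw^[k] (Dseg (s + 1) (s' - s)) := by
  rw [r, if_neg hp, h, h', Nat.add_sub_add_right, ← Nat.mul_sub, Dseg_two_pow_mul]

end PeriodDoubling

open PeriodDoubling in
/-- For every m ≥ 1, the first five occurrences of E_{2,m} in D start at
positions 2^m + 1, 3·2^{m−1} + 1, 5·2^m + 1, 11·2^{m−1} + 1 and 7·2^m + 1; consequently
r_0(E_{2,m}) = A_m, r_1(E_{2,m}) = r_3(E_{2,m}) = A_{m−1},
r_2(E_{2,m}) = A_{m−1} A_m B_{m+1}, and r_4(E_{2,m}) = B_m B_{m−1}. -/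
theorem first_occurrences_E2 (m : ℕ) (hm : 1 ≤ m) :
    L (E2 m) 1 = 2 ^ m + 1 ∧ L (E2 m) 2 = 3 * 2 ^ (m - 1) + 1 ∧
    L (E2 m) 3 = 5 * 2 ^ m + 1 ∧ L (E2 m) 4 = 11 * 2 ^ (m - 1) + 1 ∧
    L (E2 m) 5 = 7 * 2 ^ m + 1 ∧
    r (E2 m) 0 = A m ∧ r (E2 m) 1 = A (m - 1) ∧ r (E2 m) 3 = A (m - 1) ∧
    r (E2 m) 2 = A (m - 1) ++ A m ++ B (m + 1) ∧ r (E2 m) 4 = B m ++ B (m - 1) := by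
  obtain ⟨k, rfl⟩ : ∃ k, m = k + 1 := ⟨m - 1, by omega⟩
  simp only [Nat.add_sub_cancel]
  have l1 : L (E2 (k + 1)) 1 = 2 ^ k * 2 + 1 := L_E2_of_A_four (by decide) (by decide) (by decide)
  have l2 : L (E2 (k + 1)) 2 = 2 ^ k * 3 + 1 := L_E2_of_A_four (by decide) (by decide) (by decide)
  have l3 : L (E2 (k + 1)) 3 = 2 ^ k * 10 + 1 := L_E2_of_A_four (by decide) (by decide) (by decide)
  have l4 : L (E2 (k + 1)) 4 = 2 ^ k * 11 + 1 := L_E2_of_A_four (by decide) (by decide) (by decide)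
  have l5 : L (E2 (k + 1)) 5 = 2 ^ k * 14 + 1 := L_E2_of_A_four (by decide) (by decide) (by decide)
  refine ⟨by rw [l1]; ring, by rw [l2]; ring, by rw [l3]; ring, by rw [l4]; ring,
    by rw [l5]; ring, ?_, ?_, ?_, ?_, ?_⟩
  · rw [r_zero_of_L_one (n := 2 ^ (k + 1)) (by rw [l1]; ring), Dseg_one_two_pow]
  · rw [r_of_L one_ne_zero l1 l2, Dseg_eq_take_drop_A (M := 4) (by norm_num),
      show ((A 4).drop 2).take (3 - 2) = A 0 by decide, iterate_sigmaw_A, add_zero]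
  · rw [r_of_L three_ne_zero l3 l4, Dseg_eq_take_drop_A (M := 4) (by norm_num),
      show ((A 4).drop 10).take (11 - 10) = A 0 by decide, iterate_sigmaw_A, add_zero]
  · rw [r_of_L two_ne_zero l2 l3, Dseg_eq_take_drop_A (M := 4) (by norm_num),
      show ((A 4).drop 3).take (10 - 3) = A 0 ++ A 1 ++ B 2 by decide, sigmaw_iterate_append,
      sigmaw_iterate_append, iterate_sigmaw_A, iterate_sigmaw_A, iterate_sigmaw_B, add_zero]
  · rw [r_of_L four_ne_zero l4 l5, Dseg_eq_take_drop_A (M := 4) (by norm_num),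
      show ((A 4).drop 11).take (14 - 11) = B 1 ++ B 0 by decide, sigmaw_iterate_append,
      iterate_sigmaw_B, iterate_sigmaw_B, add_zero]
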